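/- arXiv:1708.03709 — 2 statements merged into one kernel-verified Lean document; each statement's English description precedes it below -/
import Mathlib

section
/- Let G be a group with unique roots and let c ∈ G be an element of infinite order. Then for every nonzero integer n, the normalizer in G of the cyclic subgroup ⟨c^n⟩ equals the normalizer in G of ⟨c⟩. -/
/-!
Conjugation by `g` maps `⟨c ^ n⟩` onto `⟨(g c g⁻¹) ^ n⟩`, so `g` normalizes `⟨c ^ n⟩` exactly when
`⟨(g c g⁻¹) ^ n⟩ = ⟨c ^ n⟩`. With unique roots, `⟨x ^ n⟩ = ⟨y ^ n⟩` is equivalent to `⟨x⟩ = ⟨y⟩`: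
from `x ^ n = (y ^ n) ^ k = (y ^ k) ^ n` one extracts the root `x = y ^ k`.
-/

def HasUniqueRoots (G : Type*) [Monoid G] : Prop :=
  ∀ m : ℕ, 0 < m → ∀ f g : G, f ^ m = g ^ m → f = g

namespace HasUniqueRoots

variable {G : Type*} [Group G]

theorem zpow_injective (hG : HasUniqueRoots G) {n : ℤ} (hn : n ≠ 0) :
    Function.Injective fun x : G ↦ x ^ n := by
  intro f g hfg
  have hpos : 0 < n.natAbs := Int.natAbs_pos.mpr hn
  rcases Int.natAbs_eq n with hn' | hn' <;> rw [hn'] at hfg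
  · exact hG _ hpos f g (by simpa only [zpow_natCast] using hfg)
  · exact hG _ hpos f g (by simpa only [zpow_neg, zpow_natCast, inv_inj] using hfg)

theorem zpow_mem_zpowers_zpow_iff (hG : HasUniqueRoots G) {n : ℤ} (hn : n ≠ 0) {x y : G} :
    x ^ n ∈ Subgroup.zpowers (y ^ n) ↔ x ∈ Subgroup.zpowers y := by
  simp only [Subgroup.mem_zpowers_iff]
  refine exists_congr fun k ↦ ?_
  rw [← zpow_mul, zpow_mul']
  exact (hG.zpow_injective hn).eq_iff

theorem zpowers_zpow_eq_zpowers_zpow_iff (hG : HasUniqueRoots G) {n : ℤ} (hn : n ≠ 0) {x y : G} :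
    Subgroup.zpowers (x ^ n) = Subgroup.zpowers (y ^ n) ↔
      Subgroup.zpowers x = Subgroup.zpowers y := by
  simp only [le_antisymm_iff, Subgroup.zpowers_le, hG.zpow_mem_zpowers_zpow_iff hn]

end HasUniqueRoots

theorem Subgroup.mem_normalizer_zpowers_iff {G : Type*} [Group G] {g x : G} :
    g ∈ normalizer (zpowers x : Set G) ↔ zpowers (g * x * g⁻¹) = zpowers x := by
  rw [mem_normalizer_iff_map_conj_eq, MonoidHom.map_zpowers, MonoidHom.coe_coe, MulAut.conj_apply]

theorem unique_roots_normalizer_zpowers_pow_general (G : Type*) [Group G]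
    (h : ∀ m : ℕ, 0 < m → ∀ f g : G, f ^ m = g ^ m → f = g)
    (c : G) (n : ℤ) (hn : n ≠ 0) :
    Subgroup.normalizer (Subgroup.zpowers (c ^ n) : Set G) = Subgroup.normalizer (Subgroup.zpowers c : Set G) := by
  have hG : HasUniqueRoots G := h
  ext g
  rw [Subgroup.mem_normalizer_zpowers_iff, Subgroup.mem_normalizer_zpowers_iff, ← conj_zpow,
    hG.zpowers_zpow_eq_zpowers_zpow_iff hn]

theorem unique_roots_normalizer_zpowers_pow (G : Type*) [Group G]
    (h : ∀ m : ℕ, 0 < m → ∀ f g : G, f ^ m = g ^ m → f = g)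
    (c : G) (hc : ¬ IsOfFinOrder c) (n : ℤ) (hn : n ≠ 0) :
    Subgroup.normalizer (Subgroup.zpowers (c ^ n) : Set G) = Subgroup.normalizer (Subgroup.zpowers c : Set G) :=
  unique_roots_normalizer_zpowers_pow_general G h c n hn
end

section
/- Let G be a torsion-free group and C ◁ G an infinite cyclic normal subgroup. Then every finite subgroup of the quotient G/C is cyclic. -/
/-!
Let `V` be the preimage of the finite subgroup and `c` a generator of `C`. Conjugation by
`g ∈ V` maps `c` to `c` or `c⁻¹`; in the second case the power `gⁿ = cʲ ∈ C` would satisfy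
`cʲ = c⁻ʲ`, so `gⁿ = 1`, `g = 1` and `c = c⁻¹`, which is absurd. Hence `C` is central and of
finite index in `V`, so the transfer `V → C` is `g ↦ g ^ [V : C]` (a homomorphism although `V`
is not yet known to be abelian), and it is injective since `V` is torsion-free. Thus `V` embeds
in the cyclic group `C`, and the finite subgroup `V / C` is a quotient of a cyclic group.
-/

open Subgroup

section

variable {G : Type*} [Group G]

theorem conj_eq_self_or_inv_of_zpowers_normal {c : G} (hc : ¬IsOfFinOrder c)
    [(zpowers c).Normal] (g : G) : g * c * g⁻¹ = c ∨ g * c * g⁻¹ = c⁻¹ := by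
  obtain ⟨k, hk⟩ : g * c * g⁻¹ ∈ zpowers c := Normal.conj_mem ‹_› c (mem_zpowers c) g
  obtain ⟨m, hm⟩ : g⁻¹ * c * g⁻¹⁻¹ ∈ zpowers c := Normal.conj_mem ‹_› c (mem_zpowers c) g⁻¹
  have hmk : m * k = 1 := by
    refine injective_zpow_iff_not_isOfFinOrder.mpr hc ?_
    simp only at hk hm ⊢
    rw [zpow_one, zpow_mul, hm, conj_zpow, hk]
    group
  rcases Int.eq_one_or_neg_one_of_mul_eq_one' hmk with ⟨-, rfl⟩ | ⟨-, rfl⟩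
  · exact .inl (by simpa using hk.symm)
  · exact .inr (by simpa using hk.symm)

/- Torsion-freeness is the hypothesis `htf`, not `IsMulTorsionFree G`: the latter asks `x ↦ xⁿ` to
be injective, which fails in torsion-free non-abelian groups such as the Klein bottle group. -/
theorem commute_of_pow_mem_zpowers (htf : ∀ g : G, IsOfFinOrder g → g = 1) {c : G}
    (hc : ¬IsOfFinOrder c) [(zpowers c).Normal] {g : G} {n : ℕ} (hn : n ≠ 0)
    (hgn : g ^ n ∈ zpowers c) : Commute g c := by
  refine (conj_eq_self_or_inv_of_zpowers_normal hc g).elim mul_inv_eq_iff_eq_mul.mp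
    fun hinv => ?_
  exfalso
  obtain ⟨j, hj : c ^ j = g ^ n⟩ := hgn
  have hj_neg : c ^ j = c ^ (-j) :=
    calc c ^ j = g * g ^ n * g⁻¹ := by rw [hj]; group
      _ = (g * c * g⁻¹) ^ j := by rw [← hj, conj_zpow]
      _ = c ^ (-j) := by rw [hinv, inv_zpow, zpow_neg]
  have hj0 : j = 0 := by
    have := injective_zpow_iff_not_isOfFinOrder.mpr hc hj_neg
    omega
  have hg : g = 1 := htf g (IsOfFinOrder.of_pow (by rw [← hj, hj0, zpow_zero]; exact .one) hn)
  subst hg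
  exact hc (isOfFinOrder_iff_pow_eq_one.mpr
    ⟨2, two_pos, by simpa [pow_two, mul_eq_one_iff_eq_inv] using hinv⟩)

open scoped IsMulCommutative in
theorem isCyclic_of_finiteIndex_le_center (htf : ∀ g : G, IsOfFinOrder g → g = 1)
    (K : Subgroup G) [K.FiniteIndex] [IsCyclic K] (hK : K ≤ center G) : IsCyclic G := by
  let τ := MonoidHom.transfer (MonoidHom.id K)
  have hτ (g : G) : (τ g : G) = g ^ K.index := by
    rw [MonoidHom.transfer_eq_pow _ g fun k g₀ h => ?_]
    · rfl
    · refine mul_right_cancel (b := g₀) ?_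
      rw [← mem_center_iff.mp (hK h) g₀]
      group
  refine isCyclic_of_injective τ ((injective_iff_map_eq_one τ).mpr fun g hg => ?_)
  exact htf g (IsOfFinOrder.of_pow (by rw [← hτ, hg]; exact .one) FiniteIndex.index_ne_zero)

theorem isCyclic_comap_mk'_of_finite (htf : ∀ g : G, IsOfFinOrder g → g = 1) {c : G}
    (hc : ¬IsOfFinOrder c) [(zpowers c).Normal] (F : Subgroup (G ⧸ zpowers c)) [Finite F] :
    IsCyclic (F.comap (QuotientGroup.mk' (zpowers c))) := by
  set V := F.comap (QuotientGroup.mk' (zpowers c))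
  set K := (zpowers c).subgroupOf V
  have hcV : zpowers c ≤ V := fun x hx => by
    simp [V, (QuotientGroup.eq_one_iff x).mpr hx]
  have hindex : (zpowers c).relIndex V = Nat.card F := by
    have := relIndex_ker V (QuotientGroup.mk' (zpowers c))
    rwa [QuotientGroup.ker_mk', map_comap_eq_self_of_surjective (QuotientGroup.mk'_surjective _)]
      at this
  have hindex_ne_zero : (zpowers c).relIndex V ≠ 0 := hindex ▸ Nat.card_pos.ne'
  have : K.FiniteIndex := ⟨hindex_ne_zero⟩
  have : IsCyclic K := (subgroupOfEquivOfLe hcV).isCyclic.mpr inferInstance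
  have htfV (v : V) (hv : IsOfFinOrder v) : v = 1 :=
    Subtype.ext (htf v (Submonoid.isOfFinOrder_coe.mpr hv))
  refine isCyclic_of_finiteIndex_le_center htfV K fun v hv => mem_center_iff.mpr fun w => ?_
  obtain ⟨k, hk : c ^ k = v⟩ := mem_subgroupOf.mp hv
  have hwc : Commute (w : G) c :=
    commute_of_pow_mem_zpowers htf hc hindex_ne_zero (pow_relIndex_mem _ w.2)
  exact Subtype.ext (hk ▸ hwc.zpow_right k).eq

end

theorem finite_subgroups_of_quotient_by_infinite_cyclic_are_cyclic
    (G : Type*) [Group G]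
    (htf : ∀ g : G, IsOfFinOrder g → g = 1)
    (C : Subgroup G) [C.Normal]
    (hC : ∃ c : G, ¬ IsOfFinOrder c ∧ C = Subgroup.zpowers c) :
    ∀ F : Subgroup (G ⧸ C), Finite F → IsCyclic F := by
  obtain ⟨c, hc, rfl⟩ := hC
  intro F hF
  have := isCyclic_comap_mk'_of_finite htf hc F
  exact isCyclic_of_surjective _ <|
    (QuotientGroup.mk' _).subgroupComap_surjective_of_surjective F (QuotientGroup.mk'_surjective _)
end
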